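/- arXiv:1208.2429 — 2 statements merged into one kernel-verified Lean document; each statement's English description precedes it below -/
import Mathlib

section
/- Let A ∈ ℝ^{n×n}, B ∈ ℝ^{n×m}, and let P ∈ ℝ^{n×n} be symmetric positive semidefinite and satisfy the Bellman-type inequality xᵀPx ≤ xᵀQx + uᵀRu + (Ax+Bu)ᵀP(Ax+Bu) for all x ∈ ℝⁿ and u ∈ ℝᵐ, where Q ⪰ 0 and R ⪰ 0 are symmetric. Then for every x ∈ ℝⁿ and every control sequence (u(k))_{k∈ℕ} such that the trajectory φ(k;x,u) of x⁺ = A x + B u converges to 0, one has xᵀPx ≤ Σ_{k=0}^∞ [φ(k;x,u)ᵀQφ(k;x,u) + u(k)ᵀRu(k)]. -/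
/- Along any trajectory the Bellman inequality says that `V k := φ(k)ᵀPφ(k)` decreases by at most
the stage cost: `V k ≤ ℓ(φ(k), u(k)) + V (k + 1)`. Telescoping gives `xᵀPx ≤ Σ_{k<N} ℓ + V N`, and
`V N → 0` because the trajectory tends to `0`. Working in `ℝ≥0∞` makes the partial sums converge
to the (possibly infinite) total cost. -/

open scoped Matrix

/-- The state `φ(k; x, u)` of the linear system `x⁺ = A x + B u` at time `k`,
starting from `x(0) = x` under the control sequence `u`. -/
def traj {n m : ℕ} (A : Matrix (Fin n) (Fin n) ℝ) (B : Matrix (Fin n) (Fin m) ℝ)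
    (x : Fin n → ℝ) (u : ℕ → Fin m → ℝ) : ℕ → Fin n → ℝ
  | 0 => x
  | k + 1 => A.mulVec (traj A B x u k) + B.mulVec (u k)

open scoped ENNReal Topology
open Filter Finset

theorem le_sum_range_add_of_le_add_succ {M : Type*} [AddCommMonoid M] [PartialOrder M]
    [IsOrderedAddMonoid M] {V c : ℕ → M} (h : ∀ k, V k ≤ c k + V (k + 1)) (N : ℕ) :
    V 0 ≤ ∑ k ∈ range N, c k + V N := by
  induction N with
  | zero => simp
  | succ N ih =>
    calc V 0 ≤ ∑ k ∈ range N, c k + V N := ih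
      _ ≤ ∑ k ∈ range N, c k + (c N + V (N + 1)) := add_le_add_right (h N) _
      _ = ∑ k ∈ range (N + 1), c k + V (N + 1) := by rw [sum_range_succ, add_assoc]

theorem ENNReal.le_tsum_of_le_add_succ {V c : ℕ → ℝ≥0∞} (h : ∀ k, V k ≤ c k + V (k + 1))
    (hV : Tendsto V atTop (𝓝 0)) : V 0 ≤ ∑' k, c k := by
  have hlim : Tendsto (fun N => ∑ k ∈ range N, c k + V N) atTop (𝓝 (∑' k, c k)) := by
    simpa using (ENNReal.tendsto_nat_tsum c).add hV
  exact ge_of_tendsto' hlim (le_sum_range_add_of_le_add_succ h)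

theorem Matrix.tendsto_dotProduct_mulVec_self_zero {ι α R : Type*} [Fintype ι]
    [NonUnitalNonAssocSemiring R] [TopologicalSpace R] [IsTopologicalSemiring R]
    (P : Matrix ι ι R) {l : Filter α} {v : α → ι → R} (hv : Tendsto v l (𝓝 0)) :
    Tendsto (fun a => v a ⬝ᵥ P *ᵥ v a) l (𝓝 0) := by
  have hcont : Continuous fun w : ι → R => w ⬝ᵥ P *ᵥ w := by fun_prop
  simpa [Function.comp_def] using (hcont.tendsto 0).comp hv

theorem stmt_9_general {n m : ℕ} (A : Matrix (Fin n) (Fin n) ℝ) (B : Matrix (Fin n) (Fin m) ℝ)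
    (Q : Matrix (Fin n) (Fin n) ℝ) (R : Matrix (Fin m) (Fin m) ℝ)
    (P : Matrix (Fin n) (Fin n) ℝ)
    (hBellman : ∀ (x : Fin n → ℝ) (u : Fin m → ℝ),
      x ⬝ᵥ P.mulVec x ≤ x ⬝ᵥ Q.mulVec x + u ⬝ᵥ R.mulVec u +
        (A.mulVec x + B.mulVec u) ⬝ᵥ P.mulVec (A.mulVec x + B.mulVec u)) :
    ∀ (x : Fin n → ℝ) (u : ℕ → Fin m → ℝ),
      Filter.Tendsto (fun k => traj A B x u k) Filter.atTop (nhds 0) →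
      ENNReal.ofReal (x ⬝ᵥ P.mulVec x) ≤
        ∑' k : ℕ, ENNReal.ofReal
          (traj A B x u k ⬝ᵥ Q.mulVec (traj A B x u k) + u k ⬝ᵥ R.mulVec (u k)) := by
  intro x u hconv
  refine ENNReal.le_tsum_of_le_add_succ
    (V := fun k => ENNReal.ofReal (traj A B x u k ⬝ᵥ P *ᵥ traj A B x u k)) (fun k => ?_) ?_
  · exact (ENNReal.ofReal_le_ofReal (hBellman _ (u k))).trans ENNReal.ofReal_add_le
  · simpa using ENNReal.tendsto_ofReal (P.tendsto_dotProduct_mulVec_self_zero hconv)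

/-- If `P ⪰ 0` is symmetric and satisfies the Bellman-type inequality
`xᵀPx ≤ xᵀQx + uᵀRu + (Ax+Bu)ᵀP(Ax+Bu)` for all `x, u`, then for every `x` and every
control sequence whose trajectory converges to `0`, the infinite-horizon quadratic cost
(the sum taken in `ℝ≥0∞` since it may be infinite) is at least `xᵀPx`:
`xᵀPx ≤ Σ_{k=0}^∞ [φ(k)ᵀQφ(k) + u(k)ᵀRu(k)]`. -/
theorem stmt_9 {n m : ℕ} (A : Matrix (Fin n) (Fin n) ℝ) (B : Matrix (Fin n) (Fin m) ℝ)
    (Q : Matrix (Fin n) (Fin n) ℝ) (R : Matrix (Fin m) (Fin m) ℝ)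
    (P : Matrix (Fin n) (Fin n) ℝ)
    (hQ : Q.PosSemidef) (hR : R.PosSemidef) (hP : P.PosSemidef)
    (hBellman : ∀ (x : Fin n → ℝ) (u : Fin m → ℝ),
      x ⬝ᵥ P.mulVec x ≤ x ⬝ᵥ Q.mulVec x + u ⬝ᵥ R.mulVec u +
        (A.mulVec x + B.mulVec u) ⬝ᵥ P.mulVec (A.mulVec x + B.mulVec u)) :
    ∀ (x : Fin n → ℝ) (u : ℕ → Fin m → ℝ),
      Filter.Tendsto (fun k => traj A B x u k) Filter.atTop (nhds 0) →
      ENNReal.ofReal (x ⬝ᵥ P.mulVec x) ≤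
        ∑' k : ℕ, ENNReal.ofReal
          (traj A B x u k ⬝ᵥ Q.mulVec (traj A B x u k) + u k ⬝ᵥ R.mulVec (u k)) :=
  stmt_9_general A B Q R P hBellman
end

section
/- Let A ∈ ℝ^{n×n}, B ∈ ℝ^{n×m}, X ⊆ ℝⁿ, U ⊆ ℝᵐ, let X∞ ⊆ X be the maximal controllable set, let V_p ≥ 0 and β > 0 satisfy the decrease property: for every y ∈ X∞ there exists u* ∈ U with A y + B u* ∈ X∞ and β V_p(A y + B u*) + ℓ(y,u*) ≤ β V_p(y). Fix N ≥ 1 and x ∈ X∞, and suppose u⁰ = (u⁰(0),…,u⁰(N−1)) is a minimizer over the admissible set U_N^p(x) (sequences with u(k) ∈ U, φ(k;x,u) ∈ X for 0 ≤ k ≤ N−1, and φ(N;x,u) ∈ X∞) of the cost V_{N,β}(x,u) := β V_p(φ(N;x,u)) + Σ_{k=0}^{N−1} ℓ(φ(k;x,u),u(k)). Let x⁺ := A x + B u⁰(0). Then x⁺ ∈ X∞, the admissible set U_N^p(x⁺) is nonempty, and V⁰_{N,β}(x⁺) ≤ V⁰_{N,β}(x) − ℓ(x,u⁰(0)), where V⁰_{N,β}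 denotes the optimal value function. -/
open scoped Matrix

/-- The stage cost `ℓ(x,u) = xᵀQx + uᵀRu`. -/
def stageCost {n m : ℕ} (Q : Matrix (Fin n) (Fin n) ℝ) (R : Matrix (Fin m) (Fin m) ℝ)
    (x : Fin n → ℝ) (u : Fin m → ℝ) : ℝ :=
  x ⬝ᵥ Q.mulVec x + u ⬝ᵥ R.mulVec u

/-- The set `U_N^p(x)` of `N`-step admissible control sequences: inputs in `U`, states in
`X` for `0 ≤ k ≤ N−1`, and `φ(N; x, u) ∈ X∞`. -/
def UNp {n m : ℕ} (A : Matrix (Fin n) (Fin n) ℝ) (B : Matrix (Fin n) (Fin m) ℝ)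
    (X : Set (Fin n → ℝ)) (U : Set (Fin m → ℝ)) (Xinf : Set (Fin n → ℝ)) (N : ℕ)
    (x : Fin n → ℝ) : Set (ℕ → Fin m → ℝ) :=
  {u | (∀ k < N, u k ∈ U) ∧ (∀ k < N, traj A B x u k ∈ X) ∧ traj A B x u N ∈ Xinf}

/-- The finite-horizon cost `V_{N,β}(x,u) = β V_p(φ(N;x,u)) + Σ_{k<N} ℓ(φ(k;x,u),u(k))`. -/
def VN {n m : ℕ} (A : Matrix (Fin n) (Fin n) ℝ) (B : Matrix (Fin n) (Fin m) ℝ)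
    (Q : Matrix (Fin n) (Fin n) ℝ) (R : Matrix (Fin m) (Fin m) ℝ)
    (Vp : (Fin n → ℝ) → ℝ) (β : ℝ) (N : ℕ) (x : Fin n → ℝ) (u : ℕ → Fin m → ℝ) : ℝ :=
  β * Vp (traj A B x u N) + ∑ k ∈ Finset.range N, stageCost Q R (traj A B x u k) (u k)

/-- The optimal value function `V⁰_{N,β}(x)`. -/
noncomputable def V0 {n m : ℕ} (A : Matrix (Fin n) (Fin n) ℝ) (B : Matrix (Fin n) (Fin m) ℝ)
    (X : Set (Fin n → ℝ)) (U : Set (Fin m → ℝ)) (Xinf : Set (Fin n → ℝ))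
    (Q : Matrix (Fin n) (Fin n) ℝ) (R : Matrix (Fin m) (Fin m) ℝ)
    (Vp : (Fin n → ℝ) → ℝ) (β : ℝ) (N : ℕ) (x : Fin n → ℝ) : ℝ :=
  sInf {v : ℝ | ∃ u ∈ UNp A B X U Xinf N x, v = VN A B Q R Vp β N x u}

/-! The successor state `x⁺` is steered by the tail `u⁰(1), …, u⁰(N−1)` to `y := φ(N; x, u⁰) ∈ X∞`,
and the decrease property supplies a last input `u*` keeping `A y + B u* ∈ X∞`. This shifted
sequence is admissible at `x⁺`, and its cost is that of `u⁰` with `ℓ(x, u⁰(0))` removed and the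
terminal term `β V_p(y)` replaced by `β V_p(A y + B u*) + ℓ(y, u*) ≤ β V_p(y)`. Membership
`x⁺ ∈ X∞` follows because any point steered into `X∞` through `X` is itself in `X∞`. -/

def concatControl {α : Type*} (K : ℕ) (u w : ℕ → α) : ℕ → α :=
  fun k => if k < K then u k else w (k - K)

theorem concatControl_of_lt {α : Type*} {K k : ℕ} (u w : ℕ → α) (hk : k < K) :
    concatControl K u w k = u k :=
  if_pos hk

theorem concatControl_add {α : Type*} (K j : ℕ) (u w : ℕ → α) :
    concatControl K u w (K + j) = w j := by
  simp [concatControl]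

def controllableSet {n m : ℕ} (A : Matrix (Fin n) (Fin n) ℝ) (B : Matrix (Fin n) (Fin m) ℝ)
    (X : Set (Fin n → ℝ)) (U : Set (Fin m → ℝ)) : Set (Fin n → ℝ) :=
  {x | ∃ u : ℕ → Fin m → ℝ, (∀ k, u k ∈ U) ∧ (∀ k, traj A B x u k ∈ X) ∧
    Filter.Tendsto (fun k => traj A B x u k) Filter.atTop (nhds 0)}

section Trajectory

variable {n m : ℕ} (A : Matrix (Fin n) (Fin n) ℝ) (B : Matrix (Fin n) (Fin m) ℝ)

theorem traj_congr (x : Fin n → ℝ) {u v : ℕ → Fin m → ℝ} {k : ℕ} (h : ∀ j < k, u j = v j) :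
    traj A B x u k = traj A B x v k := by
  induction k with
  | zero => rfl
  | succ k ih =>
    simp only [traj, ih fun j hj => h j (hj.trans k.lt_succ_self), h k k.lt_succ_self]

theorem traj_add (x : Fin n → ℝ) (u : ℕ → Fin m → ℝ) (j k : ℕ) :
    traj A B x u (j + k) = traj A B (traj A B x u j) (fun i => u (j + i)) k := by
  induction k with
  | zero => rfl
  | succ k ih => rw [← add_assoc, traj, traj, ih]

theorem traj_succ_eq_traj_tail (x : Fin n → ℝ) (u : ℕ → Fin m → ℝ) (k : ℕ) :
    traj A B x u (k + 1) = traj A B (A *ᵥ x + B *ᵥ u 0) (fun i => u (i + 1)) k := by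
  induction k with
  | zero => rfl
  | succ k ih => simp only [traj] at ih ⊢; rw [ih]

theorem traj_concatControl_of_le (x : Fin n → ℝ) (u w : ℕ → Fin m → ℝ) {K k : ℕ} (hk : k ≤ K) :
    traj A B x (concatControl K u w) k = traj A B x u k :=
  traj_congr A B x fun _ hj => concatControl_of_lt u w (hj.trans_le hk)

theorem traj_concatControl_add (x : Fin n → ℝ) (u w : ℕ → Fin m → ℝ) (K j : ℕ) :
    traj A B x (concatControl K u w) (K + j) = traj A B (traj A B x u K) w j := by
  rw [traj_add, traj_concatControl_of_le A B x u w le_rfl]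
  simp only [concatControl_add]

end Trajectory

section ControllableSet

variable {n m : ℕ} {A : Matrix (Fin n) (Fin n) ℝ} {B : Matrix (Fin n) (Fin m) ℝ}
  {X : Set (Fin n → ℝ)} {U : Set (Fin m → ℝ)}

theorem controllableSet_subset : controllableSet A B X U ⊆ X :=
  fun _ ⟨_, _, hX, _⟩ => hX 0

theorem mem_controllableSet_of_UNp_nonempty {K : ℕ} {x : Fin n → ℝ}
    (h : (UNp A B X U (controllableSet A B X U) K x).Nonempty) :
    x ∈ controllableSet A B X U := by
  obtain ⟨u, huU, huX, w, hwU, hwX, hw⟩ := h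
  have htail (j : ℕ) : traj A B x (concatControl K u w) (K + j) = traj A B _ w j :=
    traj_concatControl_add A B x u w K j
  refine ⟨concatControl K u w, fun k => ?_, fun k => ?_, ?_⟩
  · rcases lt_or_ge k K with hk | hk
    · rw [concatControl_of_lt u w hk]; exact huU k hk
    · obtain ⟨j, rfl⟩ := Nat.exists_eq_add_of_le hk
      rw [concatControl_add]; exact hwU j
  · rcases lt_or_ge k K with hk | hk
    · rw [traj_concatControl_of_le A B x u w hk.le]; exact huX k hk
    · obtain ⟨j, rfl⟩ := Nat.exists_eq_add_of_le hk
      rw [htail]; exact hwX j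
  · rw [← Filter.tendsto_add_atTop_iff_nat K]
    simpa only [add_comm _ K, htail] using hw

end ControllableSet

def shiftedControl {α : Type*} (N : ℕ) (u : ℕ → α) (a : α) : ℕ → α :=
  concatControl N (fun i => u (i + 1)) fun _ => a

section ShiftedControl

variable {n m : ℕ} (A : Matrix (Fin n) (Fin n) ℝ) (B : Matrix (Fin n) (Fin m) ℝ)
  (x : Fin n → ℝ) (u : ℕ → Fin m → ℝ) (a : Fin m → ℝ) {N : ℕ}

theorem shiftedControl_of_lt {k : ℕ} (hk : k < N) : shiftedControl N u a k = u (k + 1) :=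
  concatControl_of_lt _ _ hk

theorem shiftedControl_self : shiftedControl N u a N = a := by
  simp [shiftedControl, concatControl]

theorem traj_shiftedControl_of_le {k : ℕ} (hk : k ≤ N) :
    traj A B (A *ᵥ x + B *ᵥ u 0) (shiftedControl N u a) k = traj A B x u (k + 1) := by
  rw [shiftedControl, traj_concatControl_of_le A B _ _ _ hk, traj_succ_eq_traj_tail]

theorem traj_shiftedControl_succ :
    traj A B (A *ᵥ x + B *ᵥ u 0) (shiftedControl N u a) (N + 1) =
      A *ᵥ traj A B x u (N + 1) + B *ᵥ a := by
  rw [traj, traj_shiftedControl_of_le A B x u a le_rfl, shiftedControl_self]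

theorem shiftedControl_mem_UNp {X Xinf : Set (Fin n → ℝ)} {U : Set (Fin m → ℝ)}
    (hXinf : Xinf ⊆ X) (hu : u ∈ UNp A B X U Xinf (N + 1) x) (ha : a ∈ U)
    (hnext : A *ᵥ traj A B x u (N + 1) + B *ᵥ a ∈ Xinf) :
    shiftedControl N u a ∈ UNp A B X U Xinf (N + 1) (A *ᵥ x + B *ᵥ u 0) := by
  obtain ⟨huU, huX, huN⟩ := hu
  refine ⟨fun k hk => ?_, fun k hk => ?_, ?_⟩
  · rcases Nat.lt_succ_iff_lt_or_eq.mp hk with hk | rfl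
    · rw [shiftedControl_of_lt u a hk]; exact huU (k + 1) (by omega)
    · rw [shiftedControl_self]; exact ha
  · rw [traj_shiftedControl_of_le A B x u a (Nat.lt_succ_iff.mp hk)]
    rcases Nat.lt_succ_iff_lt_or_eq.mp hk with hk | rfl
    · exact huX (k + 1) (by omega)
    · exact hXinf huN
  · rw [traj_shiftedControl_succ]; exact hnext

theorem VN_shiftedControl (Q : Matrix (Fin n) (Fin n) ℝ) (R : Matrix (Fin m) (Fin m) ℝ)
    (Vp : (Fin n → ℝ) → ℝ) (β : ℝ) :
    VN A B Q R Vp β (N + 1) (A *ᵥ x + B *ᵥ u 0) (shiftedControl N u a) + stageCost Q R x (u 0) +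
        β * Vp (traj A B x u (N + 1)) =
      VN A B Q R Vp β (N + 1) x u + β * Vp (A *ᵥ traj A B x u (N + 1) + B *ᵥ a) +
        stageCost Q R (traj A B x u (N + 1)) a := by
  have hsum : ∑ k ∈ Finset.range N,
      stageCost Q R (traj A B (A *ᵥ x + B *ᵥ u 0) (shiftedControl N u a) k)
        (shiftedControl N u a k) =
      ∑ k ∈ Finset.range N, stageCost Q R (traj A B x u (k + 1)) (u (k + 1)) :=
    Finset.sum_congr rfl fun k hk => by
      have hk := Finset.mem_range.mp hk
      rw [traj_shiftedControl_of_le A B x u a hk.le, shiftedControl_of_lt u a hk]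
  rw [VN, VN, Finset.sum_range_succ, Finset.sum_range_succ', hsum, traj_shiftedControl_succ,
    traj_shiftedControl_of_le A B x u a le_rfl, shiftedControl_self]
  simp only [traj]
  ring

end ShiftedControl

section ValueFunction

variable {n m : ℕ} {Q : Matrix (Fin n) (Fin n) ℝ} {R : Matrix (Fin m) (Fin m) ℝ}

theorem stageCost_nonneg (hQ : Q.PosSemidef) (hR : R.PosSemidef) (x : Fin n → ℝ)
    (u : Fin m → ℝ) : 0 ≤ stageCost Q R x u := by
  have hx := hQ.dotProduct_mulVec_nonneg x
  have hu := hR.dotProduct_mulVec_nonneg u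
  simp only [star_trivial] at hx hu
  exact add_nonneg hx hu

variable (A : Matrix (Fin n) (Fin n) ℝ) (B : Matrix (Fin n) (Fin m) ℝ)
  {Vp : (Fin n → ℝ) → ℝ} {β : ℝ}

theorem VN_nonneg (hQ : Q.PosSemidef) (hR : R.PosSemidef) (hVp : ∀ y, 0 ≤ Vp y) (hβ : 0 ≤ β)
    (N : ℕ) (x : Fin n → ℝ) (u : ℕ → Fin m → ℝ) : 0 ≤ VN A B Q R Vp β N x u :=
  add_nonneg (mul_nonneg hβ (hVp _))
    (Finset.sum_nonneg fun _ _ => stageCost_nonneg hQ hR _ _)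

variable (X : Set (Fin n → ℝ)) (U : Set (Fin m → ℝ)) (Xinf : Set (Fin n → ℝ)) (N : ℕ)
  {x : Fin n → ℝ}

theorem V0_le_VN (hQ : Q.PosSemidef) (hR : R.PosSemidef) (hVp : ∀ y, 0 ≤ Vp y) (hβ : 0 ≤ β)
    {u : ℕ → Fin m → ℝ} (hu : u ∈ UNp A B X U Xinf N x) :
    V0 A B X U Xinf Q R Vp β N x ≤ VN A B Q R Vp β N x u :=
  csInf_le ⟨0, by rintro _ ⟨v, -, rfl⟩; exact VN_nonneg A B hQ hR hVp hβ N x v⟩ ⟨u, hu, rfl⟩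

theorem V0_eq_VN_of_isMinOn {u0 : ℕ → Fin m → ℝ} (hu0 : u0 ∈ UNp A B X U Xinf N x)
    (hopt : ∀ u ∈ UNp A B X U Xinf N x, VN A B Q R Vp β N x u0 ≤ VN A B Q R Vp β N x u) :
    V0 A B X U Xinf Q R Vp β N x = VN A B Q R Vp β N x u0 :=
  IsLeast.csInf_eq ⟨⟨u0, hu0, rfl⟩, by rintro _ ⟨u, hu, rfl⟩; exact hopt u hu⟩

end ValueFunction

theorem stmt_11_general {n m : ℕ} (A : Matrix (Fin n) (Fin n) ℝ) (B : Matrix (Fin n) (Fin m) ℝ)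
    (X : Set (Fin n → ℝ)) (U : Set (Fin m → ℝ))
    (Q : Matrix (Fin n) (Fin n) ℝ) (R : Matrix (Fin m) (Fin m) ℝ)
    (hQ : Q.PosSemidef) (hR : R.PosSemidef)
    (Xinf : Set (Fin n → ℝ))
    (hXinf : Xinf = {x | ∃ u : ℕ → Fin m → ℝ, (∀ k, u k ∈ U) ∧ (∀ k, traj A B x u k ∈ X) ∧
      Filter.Tendsto (fun k => traj A B x u k) Filter.atTop (nhds 0)})
    (Vp : (Fin n → ℝ) → ℝ) (hVp : ∀ y, 0 ≤ Vp y) (β : ℝ) (hβ : 0 < β)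
    (hdec : ∀ y ∈ Xinf, ∃ u ∈ U, A.mulVec y + B.mulVec u ∈ Xinf ∧
      β * Vp (A.mulVec y + B.mulVec u) + stageCost Q R y u ≤ β * Vp y)
    (N : ℕ) (hN : 1 ≤ N) (x : Fin n → ℝ)
    (u0 : ℕ → Fin m → ℝ) (hu0 : u0 ∈ UNp A B X U Xinf N x)
    (hopt : ∀ u ∈ UNp A B X U Xinf N x, VN A B Q R Vp β N x u0 ≤ VN A B Q R Vp β N x u) :
    A.mulVec x + B.mulVec (u0 0) ∈ Xinf ∧
      (UNp A B X U Xinf N (A.mulVec x + B.mulVec (u0 0))).Nonempty ∧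
      V0 A B X U Xinf Q R Vp β N (A.mulVec x + B.mulVec (u0 0)) ≤
        V0 A B X U Xinf Q R Vp β N x - stageCost Q R x (u0 0) := by
  obtain ⟨M, rfl⟩ := Nat.exists_eq_add_of_le' hN
  obtain rfl : Xinf = controllableSet A B X U := hXinf
  obtain ⟨a, haU, hnext, hdecrease⟩ := hdec _ hu0.2.2
  have hshift := shiftedControl_mem_UNp A B x u0 a controllableSet_subset hu0 haU hnext
  refine ⟨mem_controllableSet_of_UNp_nonempty ⟨_, hshift⟩, ⟨_, hshift⟩, ?_⟩
  have hcost := VN_shiftedControl A B x u0 a Q R Vp β (N := M)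
  rw [V0_eq_VN_of_isMinOn A B X U _ _ hu0 hopt]
  linarith [V0_le_VN A B X U _ _ hQ hR hVp hβ.le hshift]

/-- (Recursive feasibility and descent.) If `u⁰` minimizes the
finite-horizon cost over `U_N^p(x)` for `x ∈ X∞` (the maximal controllable set), then
the successor state `x⁺ = Ax + Bu⁰(0)` belongs to `X∞`, its admissible set `U_N^p(x⁺)`
is nonempty, and `V⁰_{N,β}(x⁺) ≤ V⁰_{N,β}(x) − ℓ(x, u⁰(0))`. -/
theorem stmt_11 {n m : ℕ} (A : Matrix (Fin n) (Fin n) ℝ) (B : Matrix (Fin n) (Fin m) ℝ)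
    (X : Set (Fin n → ℝ)) (U : Set (Fin m → ℝ))
    (Q : Matrix (Fin n) (Fin n) ℝ) (R : Matrix (Fin m) (Fin m) ℝ)
    (hQ : Q.PosSemidef) (hR : R.PosSemidef)
    (Xinf : Set (Fin n → ℝ))
    (hXinf : Xinf = {x | ∃ u : ℕ → Fin m → ℝ, (∀ k, u k ∈ U) ∧ (∀ k, traj A B x u k ∈ X) ∧
      Filter.Tendsto (fun k => traj A B x u k) Filter.atTop (nhds 0)})
    (Vp : (Fin n → ℝ) → ℝ) (hVp : ∀ y, 0 ≤ Vp y) (β : ℝ) (hβ : 0 < β)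
    (hdec : ∀ y ∈ Xinf, ∃ u ∈ U, A.mulVec y + B.mulVec u ∈ Xinf ∧
      β * Vp (A.mulVec y + B.mulVec u) + stageCost Q R y u ≤ β * Vp y)
    (N : ℕ) (hN : 1 ≤ N) (x : Fin n → ℝ) (hx : x ∈ Xinf)
    (u0 : ℕ → Fin m → ℝ) (hu0 : u0 ∈ UNp A B X U Xinf N x)
    (hopt : ∀ u ∈ UNp A B X U Xinf N x, VN A B Q R Vp β N x u0 ≤ VN A B Q R Vp β N x u) :
    A.mulVec x + B.mulVec (u0 0) ∈ Xinf ∧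
      (UNp A B X U Xinf N (A.mulVec x + B.mulVec (u0 0))).Nonempty ∧
      V0 A B X U Xinf Q R Vp β N (A.mulVec x + B.mulVec (u0 0)) ≤
        V0 A B X U Xinf Q R Vp β N x - stageCost Q R x (u0 0) :=
  stmt_11_general A B X U Q R hQ hR Xinf hXinf Vp hVp β hβ hdec N hN x u0 hu0 hopt
end
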